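/- (Dual certificate implies uniqueness.) Let x = Σ_{k=1}^m G(θ_k)c_k with θ_k ∈ Θ pairwise distinct, c_k ≠ 0, and m < n. Suppose there exists q ∈ ℂⁿ such that the function Q(θ) = G(θ)*q satisfies: (i) Q(θ_k) = (c_k/|c_k|)‖G(θ_k)‖ for all θ_k ∈ Θ, and (ii) |Q(θ)| < ‖G(θ)‖ for all θ ∉ Θ. Then the atomic norm satisfies ‖x‖_A = Σ_{k=1}^m |c_k|‖G(θ_k)‖, and this decomposition is the unique atomic decomposition achieving the atomic norm. -/

import Mathlib

open Matrix

noncomputable def Gv {n : ℕ} (A : Matrix (Fin n) (Fin n) ℂ) (b : Fin n → ℂ) (θ : ℝ) :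
    Fin n → ℂ :=
  ((1 : Matrix (Fin n) (Fin n) ℂ) - Complex.exp (-(θ : ℂ) * Complex.I) • A)⁻¹ *ᵥ b

def SchurStable {n : ℕ} (A : Matrix (Fin n) (Fin n) ℂ) : Prop :=
  ∀ z ∈ spectrum ℂ A, ‖z‖ < 1

def Reachable {n : ℕ} (A : Matrix (Fin n) (Fin n) ℂ) (b : Fin n → ℂ) : Prop :=
  Submodule.span ℂ (Set.range fun k : Fin n => (A ^ (k : ℕ)) *ᵥ b) = ⊤

/-- Euclidean norm on ℂⁿ. -/
noncomputable def enorm {n : ℕ} (v : Fin n → ℂ) : ℝ :=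
  Real.sqrt (∑ i, Complex.normSq (v i))

/-- The atomic norm associated with the atoms G(θ), θ ∈ [0, 2π). -/
noncomputable def atomicNorm {n : ℕ} (A : Matrix (Fin n) (Fin n) ℂ) (b : Fin n → ℂ)
    (x : Fin n → ℂ) : ℝ :=
  sInf { t : ℝ | ∃ (m : ℕ) (θ : Fin m → ℝ) (c : Fin m → ℂ),
    (∀ k, θ k ∈ Set.Ico (0 : ℝ) (2 * Real.pi)) ∧
    x = ∑ k, c k • Gv A b (θ k) ∧
    t = ∑ k, ‖c k‖ * _root_.enorm (Gv A b (θ k)) }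

/-!
For any decomposition `x = Σ c'ₖ G(θ'ₖ)` the certificate gives
`Re ⟨q, x⟩ = Σ Re (conj c'ₖ Q(θ'ₖ)) ≤ Σ |c'ₖ| ‖G(θ'ₖ)‖`, because `|Q| ≤ ‖G‖` on `[0, 2π)`;
the interpolation condition `Q(θₖ) = (cₖ/|cₖ|) ‖G(θₖ)‖` makes this an equality for the given
decomposition, which is therefore optimal. An optimal decomposition attains equality term by term,
so it only uses atoms with `|Q(θ'ₖ)| = ‖G(θ'ₖ)‖`, i.e. `θ'ₖ ∈ Θ`, and it then coincides with the
given one because at most `n` distinct atoms are linearly independent.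

That independence comes from reachability: multiplying `Σ gᵢ (I - zᵢ A)⁻¹ b = 0` by
`∏ᵢ (I - zᵢ A)` gives `p(A) b = 0` with `p = Σ gᵢ ∏_{j ≠ i} (1 - zⱼ X)` of degree `< n`,
so `p = 0`, and evaluating `p` at `1 / zᵢ` gives `gᵢ = 0`.
-/

open Polynomial ComplexConjugate

theorem Complex.re_conj_mul_le_of_norm_le (c : ℂ) {w : ℂ} {r : ℝ} (h : ‖w‖ ≤ r) :
    (conj c * w).re ≤ ‖c‖ * r :=
  (Complex.re_le_norm _).trans (by simpa using mul_le_mul_of_nonneg_left h (norm_nonneg c))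

theorem Complex.conj_mul_div_norm (c : ℂ) : conj c * (c / ‖c‖) = ‖c‖ := by
  rcases eq_or_ne c 0 with rfl | hc
  · simp
  · rw [← mul_div_assoc, Complex.conj_mul', sq, mul_div_cancel_right₀ _ (by simpa using hc)]

theorem Complex.norm_div_norm_mul_ofReal {c : ℂ} (hc : c ≠ 0) {r : ℝ} (hr : 0 ≤ r) :
    ‖c / ‖c‖ * r‖ = r := by
  rw [norm_mul, norm_div, Complex.norm_real, Complex.norm_real, norm_norm,
    div_self (norm_ne_zero_iff.2 hc), one_mul, Real.norm_of_nonneg hr]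

section

variable {ι : Type*} [Fintype ι] {c w : ι → ℂ} {r : ι → ℝ}

theorem re_sum_conj_mul_le (h : ∀ i, ‖w i‖ ≤ r i) :
    (∑ i, conj (c i) * w i).re ≤ ∑ i, ‖c i‖ * r i := by
  rw [Complex.re_sum]
  exact Finset.sum_le_sum fun i _ => Complex.re_conj_mul_le_of_norm_le _ (h i)

theorem re_sum_conj_mul_lt (h : ∀ i, ‖w i‖ ≤ r i) {k : ι} (hck : c k ≠ 0) (hk : ‖w k‖ < r k) :
    (∑ i, conj (c i) * w i).re < ∑ i, ‖c i‖ * r i := by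
  rw [Complex.re_sum]
  refine Finset.sum_lt_sum (fun i _ => Complex.re_conj_mul_le_of_norm_le _ (h i))
    ⟨k, Finset.mem_univ k, (Complex.re_le_norm _).trans_lt ?_⟩
  rw [norm_mul, Complex.norm_conj]
  exact mul_lt_mul_of_pos_left hk (norm_pos_iff.2 hck)

end

theorem star_sum_smul_dotProduct {n : ℕ} {ι : Type*} [Fintype ι] (c : ι → ℂ)
    (v : ι → Fin n → ℂ) (q : Fin n → ℂ) :
    star (∑ i, c i • v i) ⬝ᵥ q = ∑ i, conj (c i) * (star (v i) ⬝ᵥ q) := by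
  simp [star_sum, star_smul, sum_dotProduct, smul_dotProduct]

theorem re_star_sum_smul_dotProduct_of_eq {n : ℕ} {ι : Type*} [Fintype ι] {c : ι → ℂ}
    {v : ι → Fin n → ℂ} {q : Fin n → ℂ} {r : ι → ℝ}
    (h : ∀ i, star (v i) ⬝ᵥ q = c i / ‖c i‖ * r i) :
    (star (∑ i, c i • v i) ⬝ᵥ q).re = ∑ i, ‖c i‖ * r i := by
  rw [star_sum_smul_dotProduct, Complex.re_sum]
  refine Finset.sum_congr rfl fun i _ => ?_
  rw [h i, ← mul_assoc, Complex.conj_mul_div_norm]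
  norm_cast

theorem Complex.exp_neg_mul_I_injOn :
    Set.InjOn (fun θ : ℝ => Complex.exp (-θ * Complex.I)) (Set.Ico 0 (2 * Real.pi)) := by
  intro a ha b hb h
  refine Circle.exp_injOn_Ico (by simp) ha hb (Circle.ext ?_)
  simpa [Circle.coe_exp, neg_mul, Complex.exp_neg] using congrArg (·⁻¹) h

theorem SchurStable.isUnit_one_sub_smul {n : ℕ} {A : Matrix (Fin n) (Fin n) ℂ}
    (hA : SchurStable A) {z : ℂ} (hz : ‖z‖ ≤ 1) : IsUnit (1 - z • A) := by
  rcases eq_or_ne z 0 with rfl | hz0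
  · simp
  have hinv : z⁻¹ ∉ spectrum ℂ A := fun hmem => by
    have := hA _ hmem
    rw [norm_inv] at this
    exact (one_le_inv₀ (norm_pos_iff.2 hz0)).2 hz |>.not_gt this
  have : 1 - z • A = algebraMap ℂ _ z * (algebraMap ℂ _ z⁻¹ - A) := by
    rw [mul_sub, ← map_mul, mul_inv_cancel₀ hz0, map_one, Algebra.algebraMap_eq_smul_one,
      smul_mul_assoc, one_mul]
  rw [this]
  exact ((IsUnit.mk0 z hz0).map _).mul (spectrum.notMem_iff.1 hinv)

noncomputable def krylovMap {n : ℕ} (A : Matrix (Fin n) (Fin n) ℂ) (b : Fin n → ℂ) :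
    ℂ[X] →ₗ[ℂ] Fin n → ℂ where
  toFun p := aeval A p *ᵥ b
  map_add' p q := by rw [map_add, add_mulVec]
  map_smul' c p := by rw [map_smul, smul_mulVec, RingHom.id_apply]

theorem Reachable.linearIndependent {n : ℕ} {A : Matrix (Fin n) (Fin n) ℂ} {b : Fin n → ℂ}
    (h : Reachable A b) : LinearIndependent ℂ (fun k : Fin n => A ^ (k : ℕ) *ᵥ b) :=
  linearIndependent_of_top_le_span_of_card_eq_finrank h.ge (by simp)

theorem Reachable.disjoint_degreeLT_ker_krylovMap {n : ℕ} {A : Matrix (Fin n) (Fin n) ℂ}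
    {b : Fin n → ℂ} (h : Reachable A b) :
    Disjoint (degreeLT ℂ n) (LinearMap.ker (krylovMap A b)) := by
  rw [Submodule.disjoint_def]
  intro p hp hker
  have hsum : ∑ k : Fin n, p.coeff k • (A ^ (k : ℕ) *ᵥ b) = 0 := by
    rw [← hker, krylovMap, LinearMap.coe_mk, AddHom.coe_mk, aeval_def, eval₂_eq_sum,
      ← sum_fin _ (by simp) (mem_degreeLT.1 hp), sum_mulVec]
    refine Finset.sum_congr rfl fun k _ => ?_
    rw [Algebra.algebraMap_eq_smul_one, smul_mul_assoc, one_mul, smul_mulVec]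
  have hcoeff := Fintype.linearIndependent_iff.1 h.linearIndependent _ hsum
  have : (⟨p, hp⟩ : degreeLT ℂ n) = 0 := (degreeLTEquiv ℂ n).injective (funext fun k => by
    simpa [degreeLTEquiv] using hcoeff k)
  simpa using congrArg Subtype.val this

theorem natDegree_prod_one_sub_C_mul_X_le {R ι : Type*} [CommRing R] (s : Finset ι) (z : ι → R) :
    (∏ j ∈ s, (1 - C (z j) * X)).natDegree ≤ s.card :=
  (natDegree_prod_le _ _).trans <|
    (Finset.sum_le_card_nsmul _ _ 1 fun j _ => by compute_degree).trans (by simp)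

theorem linearIndependent_prod_erase_one_sub_C_mul_X {K ι : Type*} [Field K] [Fintype ι]
    [DecidableEq ι] {z : ι → K} (hz : Function.Injective z) (hz0 : ∀ i, z i ≠ 0) :
    LinearIndependent K (fun i => ∏ j ∈ Finset.univ.erase i, (1 - C (z j) * X)) := by
  rw [Fintype.linearIndependent_iff]
  intro g hg i
  have heval : ∀ j, eval (z i)⁻¹ (1 - C (z j) * X) = 0 ↔ j = i := fun j => by
    simp [sub_eq_zero, eq_comm (a := (1 : K)), mul_inv_eq_one₀ (hz0 i), hz.eq_iff]
  have hg_i := congrArg (eval (z i)⁻¹) hg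
  rw [eval_finsetSum, Finset.sum_eq_single i] at hg_i
  · refine (smul_eq_zero.1 (by simpa only [eval_smul, eval_zero] using hg_i)).resolve_right ?_
    rw [eval_prod, ← ne_eq, Finset.prod_ne_zero_iff]
    exact fun j hj => (heval j).not.2 (Finset.ne_of_mem_erase hj)
  · intro j _ hji
    rw [eval_smul, eval_prod, Finset.prod_eq_zero
      (Finset.mem_erase.2 ⟨Ne.symm hji, Finset.mem_univ i⟩) ((heval i).2 rfl), smul_zero]
  · simp

theorem Reachable.linearIndependent_inv_one_sub_smul_mulVec {n : ℕ}
    {A : Matrix (Fin n) (Fin n) ℂ} {b : Fin n → ℂ} (hreach : Reachable A b) {ι : Type*}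
    [Fintype ι] (hcard : Fintype.card ι ≤ n) {z : ι → ℂ} (hz : Function.Injective z)
    (hz0 : ∀ i, z i ≠ 0) (hunit : ∀ i, IsUnit (1 - z i • A)) :
    LinearIndependent ℂ (fun i => (1 - z i • A)⁻¹ *ᵥ b) := by
  classical
  set r : ι → ℂ[X] := fun i => ∏ j ∈ Finset.univ.erase i, (1 - C (z j) * X)
  have hr : LinearIndependent ℂ (krylovMap A b ∘ r) := by
    refine (linearIndependent_prod_erase_one_sub_C_mul_X hz hz0).map
      (hreach.disjoint_degreeLT_ker_krylovMap.mono_left <|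
        Submodule.span_le.2 <| Set.range_subset_iff.2 fun i => mem_degreeLT.2 ?_)
    refine degree_le_natDegree.trans_lt (WithBot.coe_lt_coe.2 ?_)
    exact (natDegree_prod_one_sub_C_mul_X_le _ _).trans_lt
      ((Finset.card_erase_lt_of_mem (Finset.mem_univ i)).trans_le (by simpa using hcard))
  have hclear : mulVecLin (aeval A (∏ j, (1 - C (z j) * X))) ∘ (fun i => (1 - z i • A)⁻¹ *ᵥ b)
      = krylovMap A b ∘ r := by
    funext i
    have hfactor : aeval A (∏ j, (1 - C (z j) * X)) = aeval A (r i) * (1 - z i • A) := by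
      rw [← Finset.prod_erase_mul _ _ (Finset.mem_univ i), map_mul]
      simp [r, Algebra.algebraMap_eq_smul_one]
    simp only [Function.comp_apply, mulVecLin_apply, hfactor, mulVec_mulVec, mul_assoc,
      mul_nonsing_inv _ ((isUnit_iff_isUnit_det _).1 (hunit i)), mul_one]
    rfl
  exact LinearIndependent.of_comp _ (hclear ▸ hr)

theorem linearIndependent_Gv {n : ℕ} {A : Matrix (Fin n) (Fin n) ℂ} (hA : SchurStable A)
    {b : Fin n → ℂ} (hreach : Reachable A b) {ι : Type*} [Fintype ι]
    (hcard : Fintype.card ι ≤ n) {θ : ι → ℝ} (hθ : ∀ i, θ i ∈ Set.Ico 0 (2 * Real.pi))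
    (hθinj : Function.Injective θ) : LinearIndependent ℂ (fun i => Gv A b (θ i)) :=
  hreach.linearIndependent_inv_one_sub_smul_mulVec hcard
    (fun i j h => hθinj (Complex.exp_neg_mul_I_injOn (hθ i) (hθ j) h))
    (fun _ => Complex.exp_ne_zero _)
    (fun _ => hA.isUnit_one_sub_smul (by simp [Complex.norm_exp]))

theorem LinearIndependent.bijective_of_sum_smul_comp_eq {R M ι κ : Type*} [Semiring R]
    [AddCommMonoid M] [Module R M] [Fintype ι] [Fintype κ] {v : ι → M}
    (hv : LinearIndependent R v) {σ : κ → ι} (hσ : Function.Injective σ) {c : ι → R}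
    {c' : κ → R} (hc : ∀ i, c i ≠ 0) (h : ∑ k, c' k • v (σ k) = ∑ i, c i • v i) :
    Function.Bijective σ ∧ ∀ k, c' k = c (σ k) := by
  have hcoeff : Finsupp.mapDomain σ (Finsupp.equivFunOnFinite.symm c')
      = Finsupp.equivFunOnFinite.symm c :=
    hv (by
      rw [Finsupp.linearCombination_mapDomain, Finsupp.linearCombination_apply,
        Finsupp.linearCombination_apply, Finsupp.sum_fintype _ _ (by simp),
        Finsupp.sum_fintype _ _ (by simp)]
      simpa using h)
  refine ⟨⟨hσ, fun i => Finsupp.mem_range_of_mapDomain_ne_zero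
    (x := Finsupp.equivFunOnFinite.symm c') ?_⟩, fun k => ?_⟩
  · rw [hcoeff]; simpa using hc i
  · simpa [Finsupp.mapDomain_apply hσ] using DFunLike.congr_fun hcoeff (σ k)

theorem re_star_dotProduct_le_of_norm_le {n : ℕ} {A : Matrix (Fin n) (Fin n) ℂ}
    {b q x : Fin n → ℂ}
    (hQ : ∀ t ∈ Set.Ico 0 (2 * Real.pi), ‖star (Gv A b t) ⬝ᵥ q‖ ≤ _root_.enorm (Gv A b t))
    {m : ℕ} {θ : Fin m → ℝ} {c : Fin m → ℂ} (hθ : ∀ k, θ k ∈ Set.Ico 0 (2 * Real.pi))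
    (hx : x = ∑ k, c k • Gv A b (θ k)) :
    (star x ⬝ᵥ q).re ≤ ∑ k, ‖c k‖ * _root_.enorm (Gv A b (θ k)) := by
  rw [hx, star_sum_smul_dotProduct]
  exact re_sum_conj_mul_le fun k => hQ _ (hθ k)

theorem atomicNorm_eq_of_re_star_dotProduct_eq {n : ℕ} {A : Matrix (Fin n) (Fin n) ℂ}
    {b q x : Fin n → ℂ}
    (hQ : ∀ t ∈ Set.Ico 0 (2 * Real.pi), ‖star (Gv A b t) ⬝ᵥ q‖ ≤ _root_.enorm (Gv A b t))
    {m : ℕ} {θ : Fin m → ℝ} {c : Fin m → ℂ} (hθ : ∀ k, θ k ∈ Set.Ico 0 (2 * Real.pi))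
    (hx : x = ∑ k, c k • Gv A b (θ k))
    (hxq : (star x ⬝ᵥ q).re = ∑ k, ‖c k‖ * _root_.enorm (Gv A b (θ k))) :
    atomicNorm A b x = ∑ k, ‖c k‖ * _root_.enorm (Gv A b (θ k)) := by
  refine IsLeast.csInf_eq ⟨⟨m, θ, c, hθ, hx, rfl⟩, ?_⟩
  rintro _ ⟨m', θ', c', hθ', hx', rfl⟩
  exact hxq ▸ re_star_dotProduct_le_of_norm_le hQ hθ' hx'

theorem Multiset.map_comp_univ_val_of_bijective {α β γ : Type*} [Fintype α] [Fintype β]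
    {σ : α → β} (hσ : Function.Bijective σ) (f : β → γ) :
    Multiset.map (f ∘ σ) Finset.univ.val = Multiset.map f Finset.univ.val := by
  simpa [Multiset.map_map] using
    congrArg (Multiset.map f) (Multiset.map_univ_val_equiv (Equiv.ofBijective σ hσ))

theorem stmt8 {n m : ℕ} (A : Matrix (Fin n) (Fin n) ℂ) (b : Fin n → ℂ)
    (hA : SchurStable A) (hreach : Reachable A b) (hm : m < n)
    (θ : Fin m → ℝ) (hθmem : ∀ k, θ k ∈ Set.Ico (0 : ℝ) (2 * Real.pi))
    (hθinj : Function.Injective θ)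
    (c : Fin m → ℂ) (hc : ∀ k, c k ≠ 0)
    (x : Fin n → ℂ) (hx : x = ∑ k, c k • Gv A b (θ k))
    (q : Fin n → ℂ)
    (hinterp : ∀ k, star (Gv A b (θ k)) ⬝ᵥ q
      = (c k / (‖c k‖ : ℂ)) * (enorm (Gv A b (θ k)) : ℂ))
    (hineq : ∀ θ' ∈ Set.Ico (0 : ℝ) (2 * Real.pi), θ' ∉ Set.range θ →
      ‖star (Gv A b θ') ⬝ᵥ q‖ < _root_.enorm (Gv A b θ')) :
    atomicNorm A b x = ∑ k, ‖c k‖ * _root_.enorm (Gv A b (θ k)) ∧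
    ∀ (m' : ℕ) (θ' : Fin m' → ℝ) (c' : Fin m' → ℂ),
      (∀ k, θ' k ∈ Set.Ico (0 : ℝ) (2 * Real.pi)) →
      Function.Injective θ' → (∀ k, c' k ≠ 0) →
      x = ∑ k, c' k • Gv A b (θ' k) →
      (∑ k, ‖c' k‖ * _root_.enorm (Gv A b (θ' k))) = atomicNorm A b x →
      Multiset.map (fun k => (θ' k, c' k)) Finset.univ.val
        = Multiset.map (fun k => (θ k, c k)) Finset.univ.val := by
  have hQ : ∀ t ∈ Set.Ico (0 : ℝ) (2 * Real.pi),
      ‖star (Gv A b t) ⬝ᵥ q‖ ≤ _root_.enorm (Gv A b t) := by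
    intro t ht
    by_cases hθt : t ∈ Set.range θ
    · obtain ⟨k, rfl⟩ := hθt
      rw [hinterp k]
      exact (Complex.norm_div_norm_mul_ofReal (hc k) (Real.sqrt_nonneg _)).le
    · exact (hineq t ht hθt).le
  have hxq : (star x ⬝ᵥ q).re = ∑ k, ‖c k‖ * _root_.enorm (Gv A b (θ k)) :=
    hx ▸ re_star_sum_smul_dotProduct_of_eq hinterp
  have hnorm := atomicNorm_eq_of_re_star_dotProduct_eq hQ hθmem hx hxq
  refine ⟨hnorm, fun m' θ' c' hθ' hθ'inj hc' hx' hcost => ?_⟩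
  have hsupp : ∀ k, θ' k ∈ Set.range θ := by
    intro k
    by_contra hk
    have hlt := re_sum_conj_mul_lt (fun j => hQ _ (hθ' j)) (hc' k) (hineq _ (hθ' k) hk)
    rw [← star_sum_smul_dotProduct, ← hx', hxq, hcost, hnorm] at hlt
    exact lt_irrefl _ hlt
  choose σ hσ using hsupp
  have hatoms := linearIndependent_Gv hA hreach (by simpa using hm.le) hθmem hθinj
  obtain ⟨hσbij, hc'σ⟩ := hatoms.bijective_of_sum_smul_comp_eq (σ := σ) (c' := c')
    (fun k l hkl => hθ'inj (by rw [← hσ k, ← hσ l, hkl])) hc (by simp only [hσ]; rw [← hx', hx])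
  have hpairs : (fun k => (θ' k, c' k)) = (fun j => (θ j, c j)) ∘ σ :=
    funext fun k => by simp [← hσ k, hc'σ k]
  rw [hpairs, Multiset.map_comp_univ_val_of_bijective hσbij]
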